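/- Let R = (G,Φ,Φ⁺) be a finite, faithful, complete signed groupoid set. Then the generalized Brink–Howlett signed groupoid set R^□ = (G^□, Ψ, Ψ⁺) is finite and complete; moreover for each object (a,X), the natural inclusion of the weak order on morphisms of G^□ with codomain (a,X) into the weak order on ₐG preserves all joins. -/

import Mathlib

open CategoryTheory

universe u v

/-- A signed groupoid set: a groupoid `G` acting on a family of definitely involuted
sets `R a` (`a ∈ Ob G`), with involution `neg`, positive parts `pos a`, and the action
commuting with the involution. -/
structure SGS (G : Type u) [Groupoid G] (R : G → Type v) where
  neg : ∀ {a : G}, R a → R a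
  pos : ∀ a : G, Set (R a)
  act : ∀ {a b : G}, (b ⟶ a) → R b → R a
  neg_neg : ∀ {a : G} (x : R a), neg (neg x) = x
  pos_iff : ∀ {a : G} (x : R a), x ∈ pos a ↔ neg x ∉ pos a
  act_id : ∀ {a : G} (x : R a), act (𝟙 a) x = x
  act_comp : ∀ {a b c : G} (g : c ⟶ b) (f : b ⟶ a) (x : R c),
      act f (act g x) = act (g ≫ f) x
  act_neg : ∀ {a b : G} (f : b ⟶ a) (x : R b), act f (neg x) = neg (act f x)

/-- The morphisms of `G` with codomain `a`. -/
abbrev SHoms (G : Type u) [Groupoid G] (a : G) : Type _ := Σ b : G, (b ⟶ a)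

namespace SGS

variable {G : Type u} [Groupoid G] {R : G → Type v} (S : SGS G R)

/-- The inversion set of a morphism `f : b ⟶ a`: positive roots at `a` sent to
negative roots at `b` by `f⁻¹`. -/
def Phi {a b : G} (f : b ⟶ a) : Set (R a) :=
  {α | α ∈ S.pos a ∧ S.act (Groupoid.inv f) α ∉ S.pos b}

/-- The inversion set of an element of `SHoms G a`. -/
def PhiS {a : G} (g : SHoms G a) : Set (R a) := S.Phi g.2

/-- `S` is faithful if only identity morphisms have empty inversion set. -/
def Faithful : Prop :=
  ∀ ⦃a b : G⦄ (f : b ⟶ a), S.Phi f = ∅ → ∃ h : b = a, f = eqToHom h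

/-- `j` is an upper bound of `F` in the weak order at `a`. -/
def IsUB {a : G} (F : Set (SHoms G a)) (j : SHoms G a) : Prop :=
  ∀ g ∈ F, S.PhiS g ⊆ S.PhiS j

/-- `j` is a least upper bound of `F` in the weak order at `a`. -/
def IsLUBw {a : G} (F : Set (SHoms G a)) (j : SHoms G a) : Prop :=
  S.IsUB F j ∧ ∀ k : SHoms G a, S.IsUB F k → S.PhiS j ⊆ S.PhiS k

/-- `S` is complete: the weak order at every object is a complete lattice
(equivalently, every family of morphisms with a common codomain has a join). -/
def Complete : Prop := ∀ (a : G) (F : Set (SHoms G a)), ∃ j : SHoms G a, S.IsLUBw F j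

/-- `S` is finite: finitely many objects, morphisms and roots. -/
def FiniteSGS (_S : SGS G R) : Prop :=
  Finite G ∧ (∀ a b : G, Finite (a ⟶ b)) ∧ ∀ a : G, Finite (R a)

/-- A square `(x, w, y, z)`: a commuting square `xw = yz` with `x(Φ_w) = Φ_y`. -/
def Square {a b c d : G} (x : b ⟶ d) (w : a ⟶ b) (y : c ⟶ d) (z : a ⟶ c) : Prop :=
  w ≫ x = z ≫ y ∧ S.act x '' S.Phi w = S.Phi y

/-- The positive real roots at `a`: the union of all inversion sets at `a`. -/
def posRe (a : G) : Set (R a) := ⋃ g : SHoms G a, S.PhiS g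

/-- An atomic morphism: an atom of the weak order at its codomain. -/
def Atomic {a : G} (g : SHoms G a) : Prop :=
  S.PhiS g ≠ ∅ ∧ ∀ h : SHoms G a, S.PhiS h ⊆ S.PhiS g →
    S.PhiS h = ∅ ∨ S.PhiS h = S.PhiS g

/-- A simple morphism: one whose inversion set is a singleton. -/
def Simple {a b : G} (f : b ⟶ a) : Prop := ∃ α : R a, S.Phi f = {α}

/-- Interval finiteness: every interval `[1ₐ, g]` of a weak order is finite. -/
def IntervalFinite : Prop :=
  ∀ (a : G) (g : SHoms G a), {h : SHoms G a | S.PhiS h ⊆ S.PhiS g}.Finite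

/-- Preprincipal: interval finite, and the inversion set of an atomic morphism is
contained in, or disjoint from, any other inversion set at the same object. -/
def Preprincipal : Prop :=
  S.IntervalFinite ∧ ∀ (a : G) (s g : SHoms G a), S.Atomic s →
    S.PhiS s ⊆ S.PhiS g ∨ S.PhiS s ∩ S.PhiS g = ∅

/-- Antipodal: the weak order at each object has a maximum element. -/
def Antipodal : Prop :=
  ∀ a : G, ∃ ω : SHoms G a, ∀ g : SHoms G a, S.PhiS g ⊆ S.PhiS ω

end SGS

namespace SGS

variable {G : Type u} [Groupoid G] {R : G → Type v} (S : SGS G R)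

/-- `f : a ⟶ b` underlies a morphism `(a, X) ⟶ (b, Y)` of `G^□` iff there is a
bijection `σ : X → Y` with `f(Φ_g) = Φ_{σ g}` for all `g ∈ X`. -/
def IsBHHom {a b : G} (X : Set (SHoms G a)) (Y : Set (SHoms G b)) (f : a ⟶ b) :
    Prop :=
  ∃ σ : X → Y, Function.Bijective σ ∧
    ∀ g : X, S.act f '' S.PhiS g.1 = S.PhiS (σ g).1

/-- The morphisms of `G^□` with codomain `(a, X)`. -/
def BHInto (a : G) (X : Set (SHoms G a)) : Type _ :=
  Σ (b : G) (Y : Set (SHoms G b)), {f : b ⟶ a // S.IsBHHom Y X f}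

/-- The underlying morphism of `G` with codomain `a` of a morphism of `G^□` with
codomain `(a, X)`. -/
def BHunder {a : G} {X : Set (SHoms G a)} (m : S.BHInto a X) : SHoms G a :=
  ⟨m.1, m.2.2.1⟩

end SGS


/-! Finiteness of `G^□` is inherited from `G`. For joins, let `j` be the join in `ₐG` of the
underlying morphisms of a family `F` of morphisms of `G^□` into `(a, X)`. For `g ∈ X`, each
`m ∈ F` gives a square `(m, h, g, z)`; transposed, these are squares with common side `g`, so the
square-join lemma yields a square with sides `g` and `j`, whose transpose provides `τ g` with
`j(Φ_{τ g}) = Φ_g`. Faithfulness makes `τ` injective, so `j` underlies a morphism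
`(b, range τ) → (a, X)` of `G^□`, which is a join there because it is one in `ₐG`.
The square-join lemma rests on the fact that the morphisms whose inversion sets avoid a fixed
`Φ_x` are closed under joins. -/

lemma CategoryTheory.Groupoid.inv_inv {G : Type u} [Groupoid G] {a b : G} (f : b ⟶ a) :
    Groupoid.inv (Groupoid.inv f) = f := by
  simp

namespace SGS

variable {G : Type u} [Groupoid G] {R : G → Type v} (S : SGS G R)

section Roots

variable {a b c : G}

lemma act_inv_comp (w : c ⟶ b) (x : b ⟶ a) (α : R a) :
    S.act (Groupoid.inv (w ≫ x)) α = S.act (Groupoid.inv w) (S.act (Groupoid.inv x) α) := by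
  rw [S.act_comp]; simp

lemma act_act_inv (f : b ⟶ a) (α : R a) : S.act f (S.act (Groupoid.inv f) α) = α := by
  rw [S.act_comp, Groupoid.inv_comp, S.act_id]

lemma act_inv_act (f : b ⟶ a) (β : R b) : S.act (Groupoid.inv f) (S.act f β) = β := by
  rw [S.act_comp, Groupoid.comp_inv, S.act_id]

lemma neg_mem_pos_iff {α : R a} : S.neg α ∈ S.pos a ↔ α ∉ S.pos a := by
  rw [S.pos_iff, S.neg_neg]

lemma mem_Phi_inv {x : b ⟶ a} {β : R b} :
    β ∈ S.Phi (Groupoid.inv x) ↔ β ∈ S.pos b ∧ S.act x β ∉ S.pos a := by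
  rw [Phi, Set.mem_ofPred_eq, Groupoid.inv_inv]

lemma neg_act_mem_Phi_of_mem_Phi_inv {x : b ⟶ a} {β : R b}
    (h : β ∈ S.Phi (Groupoid.inv x)) : S.neg (S.act x β) ∈ S.Phi x := by
  rw [S.mem_Phi_inv] at h
  refine ⟨S.neg_mem_pos_iff.mpr h.2, ?_⟩
  rw [S.act_neg, S.act_inv_act, S.neg_mem_pos_iff, not_not]
  exact h.1

lemma mem_Phi_comp {w : c ⟶ b} {x : b ⟶ a} {α : R a} :
    α ∈ S.Phi (w ≫ x) ↔ α ∈ S.pos a ∧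
      (S.act (Groupoid.inv x) α ∈ S.Phi w ∨
        (α ∈ S.Phi x ∧ S.neg (S.act (Groupoid.inv x) α) ∉ S.Phi w)) := by
  simp only [Phi, Set.mem_ofPred_eq, S.act_inv_comp, S.act_neg, S.neg_mem_pos_iff, not_not]
  generalize S.act (Groupoid.inv x) α = β
  tauto

lemma disjoint_Phi_act_image_Phi (x : b ⟶ a) (w : c ⟶ b) :
    Disjoint (S.Phi x) (S.act x '' S.Phi w) := by
  rw [Set.disjoint_left]
  rintro _ hα ⟨β, hβ, rfl⟩
  exact hα.2 (by rw [S.act_inv_act]; exact hβ.1)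

lemma disjoint_Phi_inv_iff {w : c ⟶ b} {x : b ⟶ a} :
    Disjoint (S.Phi w) (S.Phi (Groupoid.inv x)) ↔ S.act x '' S.Phi w ⊆ S.pos a := by
  simp only [Set.disjoint_left, Set.image_subset_iff, S.mem_Phi_inv]
  exact ⟨fun h β hβ => by_contra fun hn => h hβ ⟨hβ.1, hn⟩,
    fun h β hβ hn => hn.2 (h hβ)⟩

lemma Phi_comp_of_disjoint {w : c ⟶ b} {x : b ⟶ a}
    (h : Disjoint (S.Phi w) (S.Phi (Groupoid.inv x))) :
    S.Phi (w ≫ x) = S.Phi x ∪ S.act x '' S.Phi w := by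
  ext α
  rw [S.mem_Phi_comp]
  constructor
  · rintro ⟨-, hw | ⟨hx, -⟩⟩
    · exact Or.inr ⟨_, hw, S.act_act_inv x α⟩
    · exact Or.inl hx
  · rintro (hx | ⟨β, hβ, rfl⟩)
    · have hneg := S.neg_act_mem_Phi_of_mem_Phi_inv (x := Groupoid.inv x)
        (by rwa [Groupoid.inv_inv])
      exact ⟨hx.1, Or.inr ⟨hx, fun hn => Set.disjoint_left.mp h hn hneg⟩⟩
    · refine ⟨S.disjoint_Phi_inv_iff.mp h ⟨β, hβ, rfl⟩, Or.inl ?_⟩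
      rw [S.act_inv_act]
      exact hβ

lemma Phi_comp_inv_of_disjoint {p : c ⟶ a} {x : b ⟶ a} (h : Disjoint (S.Phi p) (S.Phi x)) :
    S.Phi (p ≫ Groupoid.inv x) = S.Phi (Groupoid.inv x) ∪ S.act (Groupoid.inv x) '' S.Phi p :=
  S.Phi_comp_of_disjoint (by rwa [Groupoid.inv_inv])

lemma act_image_Phi_of_subset {w : c ⟶ b} {x : b ⟶ a} (h : S.Phi x ⊆ S.Phi (w ≫ x)) :
    S.act x '' S.Phi w = S.Phi (w ≫ x) \ S.Phi x := by
  have hdisj : Disjoint (S.Phi w) (S.Phi (Groupoid.inv x)) := by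
    refine Set.disjoint_left.mpr fun β hβw hβx => ?_
    have hneg := (h (S.neg_act_mem_Phi_of_mem_Phi_inv hβx)).2
    rw [S.act_inv_comp, S.act_neg, S.act_inv_act, S.act_neg, S.neg_mem_pos_iff, not_not] at hneg
    exact hβw.2 hneg
  rw [S.Phi_comp_of_disjoint hdisj]
  exact ((S.disjoint_Phi_act_image_Phi x w).sup_sdiff_cancel_left).symm

end Roots

lemma PhiS_injective (hfa : S.Faithful) {a : G} : Function.Injective (S.PhiS (a := a)) := by
  rintro ⟨b, f⟩ ⟨b', f'⟩ (h : S.Phi f = S.Phi f')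
  have hcancel : (f ≫ Groupoid.inv f') ≫ f' = f := by simp
  have hempty : S.Phi (f ≫ Groupoid.inv f') = ∅ := by
    have := S.act_image_Phi_of_subset (w := f ≫ Groupoid.inv f') (x := f') (by rw [hcancel, h])
    rwa [hcancel, h, Set.sdiff_self, Set.image_eq_empty] at this
  obtain ⟨rfl, hf⟩ := hfa _ hempty
  rw [eqToHom_refl, Groupoid.inv_eq_inv, comp_inv_eq_id] at hf
  rw [hf]

/-- The join `j` is bounded by `V ≫ x`, where `V` is the join of `x⁻¹` and the translates
`p ≫ x⁻¹`. -/
lemma IsLUBw.disjoint_Phi (hcomp : S.Complete) {a b : G} (x : b ⟶ a) {F : Set (SHoms G a)}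
    {j : SHoms G a} (hj : S.IsLUBw F j) (hF : ∀ p ∈ F, Disjoint (S.PhiS p) (S.Phi x)) :
    Disjoint (S.PhiS j) (S.Phi x) := by
  obtain ⟨V, hV⟩ := hcomp b
    (insert ⟨a, Groupoid.inv x⟩ ((fun p : SHoms G a => ⟨p.1, p.2 ≫ Groupoid.inv x⟩) '' F))
  have hVx : S.Phi (V.2 ≫ x) ⊆ S.act x '' S.PhiS V := by
    have hcancel : (V.2 ≫ x) ≫ Groupoid.inv x = V.2 := by simp
    have hsub : S.Phi (Groupoid.inv x) ⊆ S.Phi ((V.2 ≫ x) ≫ Groupoid.inv x) := by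
      rw [hcancel]
      exact hV.1 _ (Set.mem_insert _ _)
    have himage := S.act_image_Phi_of_subset hsub
    rw [hcancel] at himage
    intro α hα
    exact ⟨_, (himage.subset ⟨α, hα, rfl⟩).1, S.act_act_inv x α⟩
  have hub : S.IsUB F ⟨V.1, V.2 ≫ x⟩ := by
    intro p hp α hα
    have hβ : S.act (Groupoid.inv x) α ∈ S.PhiS V := by
      refine hV.1 _ (Set.mem_insert_of_mem _ ⟨p, hp, rfl⟩) ?_
      show _ ∈ S.Phi (p.2 ≫ Groupoid.inv x)
      rw [S.Phi_comp_inv_of_disjoint (hF p hp)]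
      exact Or.inr ⟨α, hα, rfl⟩
    exact S.mem_Phi_comp.mpr ⟨hα.1, Or.inl hβ⟩
  exact (S.disjoint_Phi_act_image_Phi x V.2).symm.mono_left (hVx.trans' (hj.2 _ hub))

section Squares

variable {a b c d : G}

lemma square_of_act_image_eq {x : b ⟶ d} {w : a ⟶ b} {y : c ⟶ d}
    (h : S.act x '' S.Phi w = S.Phi y) : S.Square x w y (w ≫ x ≫ Groupoid.inv y) :=
  ⟨by simp, h⟩

lemma disjoint_Phi_inv_of_act_image_eq {x : b ⟶ d} {w : a ⟶ b} {y : c ⟶ d}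
    (h : S.act x '' S.Phi w = S.Phi y) : Disjoint (S.Phi w) (S.Phi (Groupoid.inv x)) := by
  rw [S.disjoint_Phi_inv_iff, h]
  exact fun _ hα => hα.1

lemma Square.symm {x : b ⟶ d} {w : a ⟶ b} {y : c ⟶ d} {z : a ⟶ c} (hs : S.Square x w y z) :
    S.Square y z x w := by
  obtain ⟨hcomm, himage⟩ := hs
  have hPhi : S.Phi (z ≫ y) = S.Phi x ∪ S.Phi y := by
    rw [← hcomm, S.Phi_comp_of_disjoint (S.disjoint_Phi_inv_of_act_image_eq himage), himage]
  have hdisj : Disjoint (S.Phi x) (S.Phi y) := himage ▸ S.disjoint_Phi_act_image_Phi x w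
  refine ⟨hcomm.symm, ?_⟩
  rw [S.act_image_Phi_of_subset (hPhi ▸ Set.subset_union_right), hPhi]
  exact hdisj.sup_sdiff_cancel_right

/-- The square-join lemma; the second side of the new square is the join `Q` of the second
sides. -/
lemma Square.exists_join (hcomp : S.Complete) (x : b ⟶ d) {F : Set (SHoms G d)}
    {j : SHoms G d} (hj : S.IsLUBw F j)
    (hF : ∀ y ∈ F, ∃ (w : SHoms G b) (z : w.1 ⟶ y.1), S.Square x w.2 y.2 z) :
    ∃ (w : SHoms G b) (z : w.1 ⟶ j.1), S.Square x w.2 j.2 z := by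
  have hjx : Disjoint (S.PhiS j) (S.Phi x) := by
    refine hj.disjoint_Phi S hcomp x fun y hy => ?_
    obtain ⟨w, z, -, hwy : S.act x '' S.PhiS w = S.PhiS y⟩ := hF y hy
    rw [← hwy]
    exact (S.disjoint_Phi_act_image_Phi x w.2).symm
  obtain ⟨Q, hQ⟩ := hcomp b {w | ∃ y ∈ F, S.act x '' S.PhiS w = S.PhiS y}
  have hQx : Disjoint (S.PhiS Q) (S.Phi (Groupoid.inv x)) := by
    refine hQ.disjoint_Phi S hcomp (Groupoid.inv x) ?_
    rintro w ⟨y, -, hwy⟩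
    exact S.disjoint_Phi_inv_of_act_image_eq hwy
  refine ⟨Q, _, S.square_of_act_image_eq (subset_antisymm ?_ ?_)⟩
  · have hPhi : S.Phi (j.2 ≫ Groupoid.inv x)
        = S.Phi (Groupoid.inv x) ∪ S.act (Groupoid.inv x) '' S.PhiS j :=
      S.Phi_comp_inv_of_disjoint hjx
    have hub : S.IsUB {w | ∃ y ∈ F, S.act x '' S.PhiS w = S.PhiS y}
        ⟨j.1, j.2 ≫ Groupoid.inv x⟩ := by
      rintro w ⟨y, hy, hwy⟩ β hβ
      show β ∈ S.Phi (j.2 ≫ Groupoid.inv x)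
      rw [hPhi]
      exact Or.inr ⟨S.act x β, hj.1 y hy (hwy ▸ ⟨β, hβ, rfl⟩), S.act_inv_act x β⟩
    rintro _ ⟨β, hβ, rfl⟩
    have hβj : β ∈ S.Phi (j.2 ≫ Groupoid.inv x) := hQ.2 _ hub hβ
    rw [hPhi] at hβj
    rcases hβj with hβx | ⟨α, hα, rfl⟩
    · exact absurd hβx (Set.disjoint_left.mp hQx hβ)
    · rwa [S.act_act_inv]
  · have hPhi : S.Phi (Q.2 ≫ x) = S.Phi x ∪ S.act x '' S.PhiS Q := S.Phi_comp_of_disjoint hQx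
    have hub : S.IsUB F ⟨Q.1, Q.2 ≫ x⟩ := by
      intro y hy
      obtain ⟨w, z, -, hwy : S.act x '' S.PhiS w = S.PhiS y⟩ := hF y hy
      show S.PhiS y ⊆ S.Phi (Q.2 ≫ x)
      rw [hPhi, ← hwy]
      exact (Set.image_mono (hQ.1 w ⟨y, hy, hwy⟩)).trans Set.subset_union_right
    intro α hα
    have hαQ : α ∈ S.Phi (Q.2 ≫ x) := hj.2 _ hub hα
    rw [hPhi] at hαQ
    exact hαQ.resolve_left (Set.disjoint_left.mp hjx hα)

end Squares

lemma IsBHHom.exists_square {a b : G} {Y : Set (SHoms G b)} {X : Set (SHoms G a)} {f : b ⟶ a}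
    (hf : S.IsBHHom Y X f) (g : X) :
    ∃ (h : SHoms G b) (z : h.1 ⟶ g.1.1), S.Square f h.2 g.1.2 z := by
  obtain ⟨σ, hσ, hact⟩ := hf
  obtain ⟨h, rfl⟩ := hσ.2 g
  exact ⟨h.1, _, S.square_of_act_image_eq (hact h)⟩

lemma isBHHom_range (hfa : S.Faithful) {a b : G} {X : Set (SHoms G a)} {f : b ⟶ a}
    {τ : X → SHoms G b} (hτ : ∀ g, S.act f '' S.PhiS (τ g) = S.PhiS g.1) :
    S.IsBHHom (Set.range τ) X f := by
  have hinj : Function.Injective τ := fun g g' h =>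
    Subtype.ext (S.PhiS_injective hfa (by rw [← hτ, ← hτ, h]))
  let e := Equiv.ofInjective τ hinj
  refine ⟨e.symm, e.symm.bijective, fun q => ?_⟩
  conv_lhs => rw [← e.apply_symm_apply q]
  exact hτ _

lemma exists_BHunder_eq_of_isLUBw (hfa : S.Faithful) (hcomp : S.Complete) {a : G}
    {X : Set (SHoms G a)} {F : Set (S.BHInto a X)} {j : SHoms G a}
    (hj : S.IsLUBw (S.BHunder '' F) j) : ∃ m : S.BHInto a X, S.BHunder m = j := by
  have hsq : ∀ g : X, ∃ (h : SHoms G j.1) (z : h.1 ⟶ g.1.1), S.Square j.2 h.2 g.1.2 z := by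
    intro g
    obtain ⟨w, z, hs⟩ := Square.exists_join S hcomp g.1.2 hj (by
      rintro _ ⟨m, -, rfl⟩
      obtain ⟨h, z, hs⟩ := m.2.2.2.exists_square S g
      exact ⟨⟨_, z⟩, h.2, hs.symm⟩)
    exact ⟨⟨_, z⟩, w.2, hs.symm⟩
  choose τ z hτ using hsq
  exact ⟨⟨j.1, Set.range τ, j.2, S.isBHHom_range hfa fun g => (hτ g).2⟩, rfl⟩

lemma finite_BHInto [Finite G] [∀ a b : G, Finite (a ⟶ b)] (a : G) (X : Set (SHoms G a)) :
    Finite (S.BHInto a X) :=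
  inferInstanceAs (Finite (Σ (b : G) (Y : Set (SHoms G b)), {f : b ⟶ a // S.IsBHHom Y X f}))

end SGS

/-- if `R` is a finite, faithful, complete signed groupoid set, then
`R^□` is finite and complete; moreover every family of morphisms of `G^□` with
codomain `(a, X)` has a join in the weak order at `(a, X)` which is also its join in
the weak order on `ₐG` (the inclusion of weak orders preserves all joins). -/
theorem stmt_18 {G : Type u} [Groupoid G] {R : G → Type v} (S : SGS G R)
    (hfin : S.FiniteSGS) (hfa : S.Faithful) (hcomp : S.Complete) :
    Finite (Σ a : G, Set (SHoms G a)) ∧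
    (∀ (a : G) (X : Set (SHoms G a)), Finite (S.BHInto a X)) ∧
    (∀ (a : G) (X : Set (SHoms G a)) (F : Set (S.BHInto a X)),
      ∃ j : S.BHInto a X,
        (∀ m ∈ F, S.PhiS (S.BHunder m) ⊆ S.PhiS (S.BHunder j)) ∧
        (∀ k : SHoms G a, (∀ m ∈ F, S.PhiS (S.BHunder m) ⊆ S.PhiS k) →
          S.PhiS (S.BHunder j) ⊆ S.PhiS k)) := by
  obtain ⟨hG, hHom, -⟩ := hfin
  refine ⟨inferInstance, S.finite_BHInto, fun a X F => ?_⟩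
  obtain ⟨j, hj⟩ := hcomp a (S.BHunder '' F)
  obtain ⟨m, rfl⟩ := S.exists_BHunder_eq_of_isLUBw hfa hcomp hj
  exact ⟨m, fun m' hm' => hj.1 _ ⟨m', hm', rfl⟩,
    fun k hk => hj.2 k (by rintro _ ⟨m', hm', rfl⟩; exact hk m' hm')⟩
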